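/- The bond measure is anti-monotone: for all patterns Y, X with ∅ ≠ Y ⊆ X ⊆ ℐ one has bond(X) ≤ bond(Y). Consequently, for any threshold minbond, if X is correlated (bond(X) ≥ minbond) then every nonempty subset of X is correlated, i.e. the correlated patterns form an order ideal among nonempty patterns. -/

import Mathlib

open Finset

variable {τ ι : Type*} [DecidableEq ι]

/-- Conjunctive support: number of transactions containing the whole pattern. -/
def suppConj (T : Finset τ) (items : τ → Finset ι) (X : Finset ι) : ℕ :=
  (T.filter fun t => X ⊆ items t).card

/-- Disjunctive support: number of transactions containing at least one item of the pattern. -/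
def suppDisj (T : Finset τ) (items : τ → Finset ι) (X : Finset ι) : ℕ :=
  (T.filter fun t => (X ∩ items t).Nonempty).card

/-- The bond measure (division by zero in `ℚ` yields `0`, matching the convention). -/
def bond (T : Finset τ) (items : τ → Finset ι) (X : Finset ι) : ℚ :=
  (suppConj T items X : ℚ) / (suppDisj T items X : ℚ)

section

variable (T : Finset τ) (items : τ → Finset ι) {X Y : Finset ι}

theorem suppConj_anti (hYX : Y ⊆ X) : suppConj T items X ≤ suppConj T items Y :=
  card_le_card <| monotone_filter_right _ fun _ _ hX => hYX.trans hX

theorem suppDisj_mono (hYX : Y ⊆ X) : suppDisj T items Y ≤ suppDisj T items X :=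
  card_le_card <| monotone_filter_right _ fun _ _ hY => hY.mono (inter_subset_inter_right hYX)

theorem suppConj_le_suppDisj (hX : X.Nonempty) : suppConj T items X ≤ suppDisj T items X :=
  card_le_card <| monotone_filter_right _ fun _ _ hsub =>
    hX.mono (subset_inter (subset_refl X) hsub)

theorem bond_anti (hY : Y.Nonempty) (hYX : Y ⊆ X) : bond T items X ≤ bond T items Y := by
  have hconj : suppConj T items X ≤ suppConj T items Y := suppConj_anti T items hYX
  rcases Nat.eq_zero_or_pos (suppDisj T items Y) with hdisj | hdisj
  · -- `bond Y` is the junk value `0` here; since `Y ≠ ∅`, `bond X` is `0` as well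
    have hX : suppConj T items X = 0 := by
      have := suppConj_le_suppDisj T items hY
      omega
    simp only [bond, hX, Nat.cast_zero, zero_div]
    positivity
  · exact div_le_div₀ (Nat.cast_nonneg _) (by exact_mod_cast hconj) (by exact_mod_cast hdisj)
      (by exact_mod_cast suppDisj_mono T items hYX)

end

theorem stmt16_general (T : Finset τ) (items : τ → Finset ι) (I : Finset ι) :
    (∀ Y X : Finset ι, Y.Nonempty → Y ⊆ X → X ⊆ I →
      bond T items X ≤ bond T items Y) ∧
      ∀ minbond : ℚ, ∀ X : Finset ι, X ⊆ I → minbond ≤ bond T items X →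
        ∀ Y : Finset ι, Y.Nonempty → Y ⊆ X → minbond ≤ bond T items Y :=
  ⟨fun _ _ hY hYX _ => bond_anti T items hY hYX,
    fun _ _ _ hmin _ hY hYX => hmin.trans (bond_anti T items hY hYX)⟩

theorem stmt16 (T : Finset τ) (items : τ → Finset ι) (I : Finset ι)
    (hitems : ∀ t ∈ T, items t ⊆ I) :
    (∀ Y X : Finset ι, Y.Nonempty → Y ⊆ X → X ⊆ I →
      bond T items X ≤ bond T items Y) ∧
      ∀ minbond : ℚ, ∀ X : Finset ι, X ⊆ I → minbond ≤ bond T items X →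
        ∀ Y : Finset ι, Y.Nonempty → Y ⊆ X → minbond ≤ bond T items Y :=
  stmt16_general T items I
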